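/- arXiv:2102.12714 — 5 statements merged into one kernel-verified Lean document; each statement's English description precedes it below -/
import Mathlib

section
/- Let c ≥ 0 be such that g(c) = 0, and let Z_c = {y ∈ ℝ^n : y ≥ 0 entrywise, Σ_i y_i = c}. Then f_α maps Z_c into Z_c: for every y ∈ Z_c, f_α(y) ≥ 0 entrywise and Σ_i (f_α(y))_i = c. -/
/-! Nonnegativity of `f_α(y)` is termwise. Since the columns of `R` sum to one,
`∑ᵢ f_α(y)ᵢ = α (∑ᵢ yᵢ)^m + (1 - α) ∑ᵢ vᵢ = α c^m + 1 - α`, which is `c` exactly because `g(c) = 0`. -/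

open Finset Matrix

section TensorPower

variable {ι K : Type*} [CommSemiring K]

def tensorPower (m : ℕ) (x : ι → K) : (Fin m → ι) → K :=
  fun j => ∏ p, x (j p)

theorem sum_tensorPower [Fintype ι] (m : ℕ) (x : ι → K) :
    ∑ j, tensorPower m x j = (∑ i, x i) ^ m :=
  (Fintype.sum_pow x m).symm

theorem tensorPower_nonneg [PartialOrder K] [IsOrderedRing K] {m : ℕ} {x : ι → K}
    (hx : ∀ i, 0 ≤ x i) (j : Fin m → ι) : 0 ≤ tensorPower m x j :=
  prod_nonneg fun p _ => hx (j p)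

end TensorPower

section ColumnStochastic

variable {ι κ K : Type*} [Fintype κ]

theorem Matrix.sum_mulVec_of_sum_col_eq_one [Fintype ι] [Semiring K] {A : Matrix ι κ K}
    (hA : ∀ j, ∑ i, A i j = 1) (x : κ → K) : ∑ i, (A *ᵥ x) i = ∑ j, x j := by
  simp only [mulVec, dotProduct]
  rw [sum_comm]
  simp only [← sum_mul, hA, one_mul]

theorem Matrix.mulVec_nonneg_of_nonneg [Semiring K] [PartialOrder K] [IsOrderedRing K]
    {A : Matrix ι κ K} (hA : ∀ i j, 0 ≤ A i j) {x : κ → K} (hx : ∀ j, 0 ≤ x j) (i : ι) :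
    0 ≤ (A *ᵥ x) i :=
  sum_nonneg fun j _ => mul_nonneg (hA i j) (hx j)

end ColumnStochastic

section MultilinearPageRank

variable {ι K : Type*} [Fintype ι] [CommRing K] {m : ℕ}

def multilinearPageRankMap (α : K) (R : Matrix ι (Fin m → ι) K) (v x : ι → K) : ι → K :=
  fun i => α * (R *ᵥ tensorPower m x) i + (1 - α) * v i

theorem multilinearPageRankMap_nonneg [PartialOrder K] [IsOrderedRing K] {α : K}
    (hα0 : 0 ≤ α) (hα1 : α ≤ 1) {R : Matrix ι (Fin m → ι) K} (hR : ∀ i j, 0 ≤ R i j)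
    {v x : ι → K} (hv : ∀ i, 0 ≤ v i) (hx : ∀ i, 0 ≤ x i) (i : ι) :
    0 ≤ multilinearPageRankMap α R v x i :=
  add_nonneg (mul_nonneg hα0 (mulVec_nonneg_of_nonneg hR (tensorPower_nonneg hx) i))
    (mul_nonneg (sub_nonneg.2 hα1) (hv i))

theorem sum_multilinearPageRankMap (α : K) {R : Matrix ι (Fin m → ι) K}
    (hRcol : ∀ j, ∑ i, R i j = 1) (v x : ι → K) :
    ∑ i, multilinearPageRankMap α R v x i = α * (∑ i, x i) ^ m + (1 - α) * ∑ i, v i := by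
  simp only [multilinearPageRankMap, sum_add_distrib, ← mul_sum,
    sum_mulVec_of_sum_col_eq_one hRcol, sum_tensorPower]

end MultilinearPageRank

theorem mlpr_f_maps_Zc_general
    (n m : ℕ)
    (R : Matrix (Fin n) ((Fin m → Fin n)) ℝ)
    (hR : ∀ i j, 0 ≤ R i j)
    (hRcol : ∀ j, ∑ i, R i j = 1)
    (v : Fin n → ℝ) (hv : ∀ i, 0 ≤ v i) (hv1 : ∑ i, v i = 1)
    (α : ℝ) (hα0 : 0 < α) (hα1 : α < 1)
    (c : ℝ) (hgc : α * c ^ m - c + (1 - α) = 0)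
    (y : Fin n → ℝ) (hy : ∀ i, 0 ≤ y i) (hyc : ∑ i, y i = c) :
    (∀ i, 0 ≤ α * (∑ j, R i j * ∏ p, y (j p)) + (1 - α) * v i) ∧
    (∑ i, (α * (∑ j, R i j * ∏ p, y (j p)) + (1 - α) * v i)) = c := by
  refine ⟨multilinearPageRankMap_nonneg hα0.le hα1.le hR hv hy, ?_⟩
  change ∑ i, multilinearPageRankMap α R v y i = c
  rw [sum_multilinearPageRankMap α hRcol, hyc, hv1]
  linarith

/-- If `c ≥ 0` and `g(c) = 0`, then `f_α` maps
`Z_c = {y : y ≥ 0, ∑ᵢ yᵢ = c}` into itself. -/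
theorem mlpr_f_maps_Zc
    (n m : ℕ) (hn : 1 ≤ n) (hm : 2 ≤ m)
    (R : Matrix (Fin n) ((Fin m → Fin n)) ℝ)
    (hR : ∀ i j, 0 ≤ R i j)
    (hRcol : ∀ j, ∑ i, R i j = 1)
    (v : Fin n → ℝ) (hv : ∀ i, 0 ≤ v i) (hv1 : ∑ i, v i = 1)
    (α : ℝ) (hα0 : 0 < α) (hα1 : α < 1)
    (c : ℝ) (hc : 0 ≤ c) (hgc : α * c ^ m - c + (1 - α) = 0)
    (y : Fin n → ℝ) (hy : ∀ i, 0 ≤ y i) (hyc : ∑ i, y i = c) :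
    (∀ i, 0 ≤ α * (∑ j, R i j * ∏ p, y (j p)) + (1 - α) * v i) ∧
    (∑ i, (α * (∑ j, R i j * ∏ p, y (j p)) + (1 - α) * v i)) = c :=
  mlpr_f_maps_Zc_general n m R hR hRcol v hv hv1 α hα0 hα1 c hgc y hy hyc
end

section
/- Define the sequence x_0 = 0 and x_{k+1} = f_α(x_k) for k = 0,1,2,…. Then the sequence (x_k) converges to a limit x_∞ ∈ ℝ^n which satisfies x_∞ = f_α(x_∞), x_∞ ≥ 0 entrywise, and x_∞ ≤ y entrywise for every nonnegative solution y of y = f_α(y); i.e., x_∞ is the minimal nonnegative solution of the multilinear PageRank equation. -/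
/-!
Since `R`, `v` are nonnegative, `f_α` is monotone on the nonnegative orthant and `0 ≤ f_α 0`, so
the iterates `f_α^[k] 0` increase and stay below every nonnegative `y` with `f_α y ≤ y`. Because
the columns of `R` and `v` sum to `1`, `∑ f_α(x) = α (∑ x)^m + 1 - α`, so the set
`{x ≥ 0, ∑ x ≤ 1}` is invariant and the iterates are bounded. A bounded increasing sequence
converges; by continuity its limit is a fixed point, and it is below every nonnegative solution.
-/

open Finset Set Filter Topology Function

section Iterate

variable {α : Type*} {f : α → α} {a : α}

theorem MonotoneOn.monotone_iterate_of_le_map [Preorder α] (hf : MonotoneOn f (Ici a))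
    (ha : a ≤ f a) : Monotone fun k ↦ f^[k] a := by
  have hstep : ∀ k, a ≤ f^[k] a ∧ f^[k] a ≤ f^[k + 1] a := by
    intro k
    induction k with
    | zero => exact ⟨le_rfl, ha⟩
    | succ k ih =>
      refine ⟨ih.1.trans ih.2, ?_⟩
      rw [iterate_succ_apply', iterate_succ_apply' f (k + 1)]
      exact hf ih.1 (ih.1.trans ih.2) ih.2
  exact monotone_nat_of_le_succ fun k ↦ (hstep k).2

theorem MonotoneOn.iterate_le_of_map_le [Preorder α] (hf : MonotoneOn f (Ici a))
    (ha : a ≤ f a) {y : α} (hay : a ≤ y) (hy : f y ≤ y) (k : ℕ) : f^[k] a ≤ y := by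
  induction k with
  | zero => exact hay
  | succ k ih =>
    rw [iterate_succ_apply']
    exact (hf (hf.monotone_iterate_of_le_map ha k.zero_le) hay ih).trans hy

theorem MonotoneOn.exists_tendsto_iterate_isLeast [ConditionallyCompleteLattice α]
    [TopologicalSpace α] [SupConvergenceClass α] [T2Space α] (hf : MonotoneOn f (Ici a))
    (hfc : Continuous f) (ha : a ≤ f a) (hbdd : BddAbove (range fun k ↦ f^[k] a)) :
    ∃ b, Tendsto (fun k ↦ f^[k] a) atTop (𝓝 b) ∧ IsFixedPt f b ∧
      IsLeast {y | a ≤ y ∧ f y ≤ y} b := by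
  have hmono := hf.monotone_iterate_of_le_map ha
  have hlim := tendsto_atTop_ciSup hmono hbdd
  have hfix : IsFixedPt f (⨆ k, f^[k] a) := isFixedPt_of_tendsto_iterate hlim hfc.continuousAt
  refine ⟨_, hlim, hfix, ⟨le_ciSup hbdd 0, hfix.le⟩, fun y ⟨hay, hy⟩ ↦ ?_⟩
  exact ciSup_le (hf.iterate_le_of_map_le ha hay hy)

end Iterate

section PageRank

variable {ι κ : Type*} [Fintype ι] [Fintype κ] [DecidableEq κ]

/-- `f_α`, with the entries of `x^{⊗m}` indexed by maps `j : κ → ι`, so that `m = card κ`. -/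
def pageRankMap (α : ℝ) (R : Matrix ι (κ → ι) ℝ) (v : ι → ℝ) (x : ι → ℝ) : ι → ℝ :=
  fun i ↦ α * (∑ j, R i j * ∏ p, x (j p)) + (1 - α) * v i

def subStochastic : Set (ι → ℝ) := {x | 0 ≤ x ∧ ∑ i, x i ≤ 1}

variable {α : ℝ} {R : Matrix ι (κ → ι) ℝ} {v : ι → ℝ}

theorem continuous_pageRankMap : Continuous (pageRankMap α R v) := by
  unfold pageRankMap; fun_prop

theorem monotoneOn_pageRankMap (hα : 0 ≤ α) (hR : ∀ i j, 0 ≤ R i j) :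
    MonotoneOn (pageRankMap α R v) (Ici 0) := by
  intro x hx y _ hxy i
  unfold pageRankMap
  gcongr with j _ p _
  · exact hR i j
  · exact fun p _ ↦ hx (j p)
  · exact hxy (j p)

theorem sum_pageRankMap (hRcol : ∀ j, ∑ i, R i j = 1) (hv1 : ∑ i, v i = 1) (x : ι → ℝ) :
    ∑ i, pageRankMap α R v x i = α * (∑ i, x i) ^ Fintype.card κ + (1 - α) := by
  have hpow : ∑ j : κ → ι, ∏ p, x (j p) = (∑ i, x i) ^ Fintype.card κ := by
    rw [← Fintype.piFinset_univ, ← prod_univ_sum, prod_const, card_univ]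
  simp only [pageRankMap, sum_add_distrib, ← mul_sum]
  rw [sum_comm, ← hpow, hv1, mul_one]
  simp only [← sum_mul, hRcol, one_mul]

theorem mapsTo_pageRankMap_subStochastic (hα0 : 0 ≤ α) (hα1 : α ≤ 1) (hR : ∀ i j, 0 ≤ R i j)
    (hRcol : ∀ j, ∑ i, R i j = 1) (hv : 0 ≤ v) (hv1 : ∑ i, v i = 1) :
    MapsTo (pageRankMap α R v) subStochastic subStochastic := by
  rintro x ⟨hx, hx1⟩
  refine ⟨fun i ↦ ?_, ?_⟩
  · have hsum : 0 ≤ ∑ j, R i j * ∏ p, x (j p) :=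
      sum_nonneg fun j _ ↦ mul_nonneg (hR i j) (prod_nonneg fun p _ ↦ hx (j p))
    exact add_nonneg (mul_nonneg hα0 hsum) (mul_nonneg (sub_nonneg.2 hα1) (hv i))
  · rw [sum_pageRankMap hRcol hv1]
    have : (∑ i, x i) ^ Fintype.card κ ≤ 1 := pow_le_one₀ (sum_nonneg fun i _ ↦ hx i) hx1
    nlinarith

theorem zero_mem_subStochastic : (0 : ι → ℝ) ∈ subStochastic := by
  simp [subStochastic]

theorem bddAbove_subStochastic : BddAbove (subStochastic : Set (ι → ℝ)) :=
  ⟨1, fun _ ⟨hx, hx1⟩ i ↦ (single_le_sum (fun j _ ↦ hx j) (mem_univ i)).trans hx1⟩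

end PageRank

theorem mlpr_minimal_solution_general
    (n m : ℕ)
    (R : Matrix (Fin n) ((Fin m → Fin n)) ℝ)
    (hR : ∀ i j, 0 ≤ R i j)
    (hRcol : ∀ j, ∑ i, R i j = 1)
    (v : Fin n → ℝ) (hv : ∀ i, 0 ≤ v i) (hv1 : ∑ i, v i = 1)
    (α : ℝ) (hα0 : 0 < α) (hα1 : α < 1)
    (x : ℕ → Fin n → ℝ)
    (hx0 : ∀ i, x 0 i = 0)
    (hxk : ∀ k i, x (k + 1) i = α * (∑ j, R i j * ∏ p, x k (j p)) + (1 - α) * v i) :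
    ∃ xlim : Fin n → ℝ,
      Filter.Tendsto x Filter.atTop (nhds xlim) ∧
      (∀ i, 0 ≤ xlim i) ∧
      (∀ i, xlim i = α * (∑ j, R i j * ∏ p, xlim (j p)) + (1 - α) * v i) ∧
      (∀ y : Fin n → ℝ, (∀ i, 0 ≤ y i) →
        (∀ i, y i = α * (∑ j, R i j * ∏ p, y (j p)) + (1 - α) * v i) →
        ∀ i, xlim i ≤ y i) := by
  set f := pageRankMap α R v
  have hx : x = fun k ↦ f^[k] 0 := by
    funext k
    induction k with
    | zero => exact funext hx0
    | succ k ih => rw [iterate_succ_apply', ← ih]; exact funext (hxk k)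
  have hS := mapsTo_pageRankMap_subStochastic hα0.le hα1.le hR hRcol hv hv1
  have hbdd : BddAbove (range fun k ↦ f^[k] 0) := bddAbove_subStochastic.mono
    (range_subset_iff.2 fun k ↦ hS.iterate k zero_mem_subStochastic)
  obtain ⟨xlim, hlim, hfix, hmin⟩ :=
    (monotoneOn_pageRankMap hα0.le hR).exists_tendsto_iterate_isLeast continuous_pageRankMap
      (hS zero_mem_subStochastic).1 hbdd
  refine ⟨xlim, hx ▸ hlim, hmin.1.1, fun i ↦ (congrFun hfix i).symm, fun y hy hyfix ↦ ?_⟩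
  exact hmin.2 ⟨hy, (funext fun i ↦ (hyfix i).symm).le⟩

/-- The fixed-point sequence `x₀ = 0`, `x_{k+1} = f_α(x_k)` converges to a
limit `x_∞` which is a nonnegative solution of the multilinear PageRank equation and is
entrywise below every nonnegative solution: the minimal nonnegative solution. -/
theorem mlpr_minimal_solution
    (n m : ℕ) (hn : 1 ≤ n) (hm : 2 ≤ m)
    (R : Matrix (Fin n) ((Fin m → Fin n)) ℝ)
    (hR : ∀ i j, 0 ≤ R i j)
    (hRcol : ∀ j, ∑ i, R i j = 1)
    (v : Fin n → ℝ) (hv : ∀ i, 0 ≤ v i) (hv1 : ∑ i, v i = 1)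
    (α : ℝ) (hα0 : 0 < α) (hα1 : α < 1)
    (x : ℕ → Fin n → ℝ)
    (hx0 : ∀ i, x 0 i = 0)
    (hxk : ∀ k i, x (k + 1) i = α * (∑ j, R i j * ∏ p, x k (j p)) + (1 - α) * v i) :
    ∃ xlim : Fin n → ℝ,
      Filter.Tendsto x Filter.atTop (nhds xlim) ∧
      (∀ i, 0 ≤ xlim i) ∧
      (∀ i, xlim i = α * (∑ j, R i j * ∏ p, xlim (j p)) + (1 - α) * v i) ∧
      (∀ y : Fin n → ℝ, (∀ i, 0 ≤ y i) →
        (∀ i, y i = α * (∑ j, R i j * ∏ p, y (j p)) + (1 - α) * v i) →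
        ∀ i, xlim i ≤ y i) :=
  mlpr_minimal_solution_general n m R hR hRcol v hv hv1 α hα0 hα1 x hx0 hxk
end

section
/- Let s be the smallest positive root of g (so s = min(1, c_α), where c_α is the positive root of g other than 1, with c_α = 1 when α = 1/m). Then the multilinear PageRank equation x = f_α(x) has exactly one nonnegative solution x with Σ_i x_i = s: if y₁ and y₂ are nonnegative solutions with Σ_i (y₁)_i = Σ_i (y₂)_i = s, then y₁ = y₂, and such a solution exists. -/
/-!
The map `F x = α R x^{⊗m} + (1 - α) v` is monotone on the nonnegative cone and sends a vector
with entry sum `σ` to one with entry sum `φ σ = α σ^m + 1 - α`, while `g z = φ z - z`.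
If `0 ≤ z` and `F z ≤ z` then `φ σ ≤ σ` for `σ = ∑ z`; since `g 0 = 1 - α > 0`, the
intermediate value theorem gives a root of `g` in `(0, σ]`, so `s ≤ σ`.
Iterating `F` from `0` gives an increasing sequence whose entry sums stay below the fixed point
`s` of `φ`; its limit is a fixed point with sum at most `s`, hence exactly `s`.
For two such fixed points `x, y`, the vector `x ⊓ y` satisfies `F (x ⊓ y) ≤ x ⊓ y`,
so its sum is at least `s` as well, which forces `x ⊓ y = x = y`.
-/

open Finset Filter Function

theorem exists_isFixedPt_of_monotoneOn_of_le_map {X : Type*} [ConditionallyCompleteLattice X]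
    [TopologicalSpace X] [OrderClosedTopology X] [SupConvergenceClass X]
    {f : X → X} {S : Set X} (hf : Continuous f) (hmono : MonotoneOn f S)
    (hmaps : Set.MapsTo f S S) (hclosed : IsClosed S) (hbdd : BddAbove S)
    {x₀ : X} (hx₀ : x₀ ∈ S) (hle : x₀ ≤ f x₀) : ∃ x ∈ S, IsFixedPt f x := by
  have hmem : ∀ k, f^[k] x₀ ∈ S := fun k => hmaps.iterate k hx₀
  have hiter : Monotone fun k => f^[k] x₀ := by
    refine monotone_nat_of_le_succ fun k => ?_
    induction k with
    | zero => exact hle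
    | succ k ih =>
      rw [iterate_succ_apply' f k, iterate_succ_apply' f (k + 1)]
      exact hmono (hmem k) (hmem (k + 1)) ih
  have hlim := tendsto_atTop_ciSup hiter (hbdd.mono (Set.range_subset_iff.2 hmem))
  exact ⟨_, hclosed.mem_of_tendsto hlim (Eventually.of_forall hmem),
    isFixedPt_of_tendsto_iterate hlim hf.continuousAt⟩

theorem exists_pos_root_le {α σ : ℝ} {m : ℕ} (hm : m ≠ 0) (hα1 : α < 1) (hσ : 0 ≤ σ)
    (hg : α * σ ^ m - σ + (1 - α) ≤ 0) : ∃ t ∈ Set.Ioc 0 σ, α * t ^ m - t + (1 - α) = 0 := by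
  have hg0 : α * (0 : ℝ) ^ m - 0 + (1 - α) = 1 - α := by simp [zero_pow hm]
  have hcont : ContinuousOn (fun t : ℝ => α * t ^ m - t + (1 - α)) (Set.Icc 0 σ) := by
    fun_prop
  obtain ⟨t, ht, hroot⟩ := intermediate_value_Icc' hσ hcont ⟨hg, by rw [hg0]; linarith⟩
  refine ⟨t, ⟨lt_of_le_of_ne ht.1 ?_, ht.2⟩, hroot⟩
  rintro rfl
  simp only [hg0] at hroot
  linarith

section MultilinearPageRank

variable {ι : Type*} [Fintype ι] {m : ℕ} (R : Matrix ι (Fin m → ι) ℝ) (v : ι → ℝ) (α : ℝ)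

def mlprMap (x : ι → ℝ) : ι → ℝ :=
  fun i => α * (∑ j, R i j * ∏ p, x (j p)) + (1 - α) * v i

variable {R v α}

theorem sum_mlprMap (hRcol : ∀ j, ∑ i, R i j = 1) (hv1 : ∑ i, v i = 1) (x : ι → ℝ) :
    ∑ i, mlprMap R v α x i = α * (∑ i, x i) ^ m + (1 - α) := by
  classical
  simp only [mlprMap, sum_add_distrib, ← mul_sum, hv1, mul_one]
  rw [sum_comm, sum_pow', Fintype.piFinset_univ]
  simp only [← sum_mul, hRcol, one_mul]

theorem mlprMap_monotoneOn (hR : ∀ i j, 0 ≤ R i j) (hα0 : 0 ≤ α) :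
    MonotoneOn (mlprMap R v α) (Set.Ici 0) := by
  intro x hx y _ hxy i
  unfold mlprMap
  gcongr with j _ p
  · exact hR i j
  · exact fun p _ => hx (j p)
  · exact hxy (j p)

theorem mlprMap_nonneg (hR : ∀ i j, 0 ≤ R i j) (hv : ∀ i, 0 ≤ v i) (hα0 : 0 ≤ α)
    (hα1 : α ≤ 1) {x : ι → ℝ} (hx : 0 ≤ x) : 0 ≤ mlprMap R v α x := fun i =>
  add_nonneg (mul_nonneg hα0 (sum_nonneg fun j _ =>
    mul_nonneg (hR i j) (prod_nonneg fun p _ => hx (j p)))) (mul_nonneg (sub_nonneg.2 hα1) (hv i))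

theorem continuous_mlprMap : Continuous (mlprMap R v α) :=
  continuous_pi fun i => by unfold mlprMap; fun_prop

theorem le_sum_of_mlprMap_le (hRcol : ∀ j, ∑ i, R i j = 1) (hv1 : ∑ i, v i = 1) (hm : m ≠ 0)
    (hα1 : α < 1) {s : ℝ} (hsmin : ∀ z : ℝ, 0 < z → α * z ^ m - z + (1 - α) = 0 → s ≤ z)
    {z : ι → ℝ} (hz : 0 ≤ z) (hFz : mlprMap R v α z ≤ z) : s ≤ ∑ i, z i := by
  have hg : α * (∑ i, z i) ^ m - ∑ i, z i + (1 - α) ≤ 0 := by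
    have := sum_le_sum fun i (_ : i ∈ univ) => hFz i
    rw [sum_mlprMap hRcol hv1] at this
    linarith
  obtain ⟨t, ht, hroot⟩ := exists_pos_root_le hm hα1 (sum_nonneg fun i _ => hz i) hg
  exact (hsmin t ht.1 hroot).trans ht.2

theorem exists_isFixedPt_mlprMap_sum_le (hR : ∀ i j, 0 ≤ R i j)
    (hRcol : ∀ j, ∑ i, R i j = 1) (hv : ∀ i, 0 ≤ v i) (hv1 : ∑ i, v i = 1) (hα0 : 0 ≤ α)
    (hα1 : α ≤ 1) {s : ℝ} (hs0 : 0 ≤ s) (hgs : α * s ^ m - s + (1 - α) = 0) :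
    ∃ x, 0 ≤ x ∧ ∑ i, x i ≤ s ∧ IsFixedPt (mlprMap R v α) x := by
  set S : Set (ι → ℝ) := {x | 0 ≤ x ∧ ∑ i, x i ≤ s}
  have hmaps : Set.MapsTo (mlprMap R v α) S S := by
    rintro x ⟨hx0, hxs⟩
    refine ⟨mlprMap_nonneg hR hv hα0 hα1 hx0, ?_⟩
    have := pow_le_pow_left₀ (sum_nonneg fun i _ => hx0 i) hxs m
    rw [sum_mlprMap hRcol hv1]
    nlinarith
  have hclosed : IsClosed S :=
    (isClosed_le continuous_const continuous_id).inter
      (isClosed_le (continuous_finsetSum _ fun i _ => continuous_apply i) continuous_const)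
  have hbdd : BddAbove S :=
    ⟨fun _ => s, fun x ⟨hx0, hxs⟩ i => (single_le_sum (fun j _ => hx0 j) (mem_univ i)).trans hxs⟩
  obtain ⟨x, ⟨hx0, hxs⟩, hx⟩ := exists_isFixedPt_of_monotoneOn_of_le_map continuous_mlprMap
    ((mlprMap_monotoneOn hR hα0).mono fun _ hx => hx.1) hmaps hclosed hbdd
    ⟨le_rfl, by simpa using hs0⟩ (mlprMap_nonneg hR hv hα0 hα1 le_rfl)
  exact ⟨x, hx0, hxs, hx⟩

theorem eq_of_isFixedPt_mlprMap (hR : ∀ i j, 0 ≤ R i j) (hRcol : ∀ j, ∑ i, R i j = 1)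
    (hv1 : ∑ i, v i = 1) (hm : m ≠ 0) (hα0 : 0 ≤ α) (hα1 : α < 1) {s : ℝ}
    (hsmin : ∀ z : ℝ, 0 < z → α * z ^ m - z + (1 - α) = 0 → s ≤ z) {x y : ι → ℝ}
    (hx0 : 0 ≤ x) (hy0 : 0 ≤ y) (hx : IsFixedPt (mlprMap R v α) x)
    (hy : IsFixedPt (mlprMap R v α) y) (hxs : ∑ i, x i ≤ s) (hys : ∑ i, y i ≤ s) : x = y := by
  have hF := mlprMap_monotoneOn (v := v) hR hα0
  have hz0 : 0 ≤ x ⊓ y := le_inf hx0 hy0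
  have hFz : mlprMap R v α (x ⊓ y) ≤ x ⊓ y :=
    le_inf ((hF hz0 hx0 inf_le_left).trans hx.le) ((hF hz0 hy0 inf_le_right).trans hy.le)
  have hsz := le_sum_of_mlprMap_le hRcol hv1 hm hα1 hsmin hz0 hFz
  have hzx : x ⊓ y = x := inf_le_left.eq_of_not_lt fun h =>
    (Fintype.sum_strictMono h).not_ge (hxs.trans hsz)
  have hzy : x ⊓ y = y := inf_le_right.eq_of_not_lt fun h =>
    (Fintype.sum_strictMono h).not_ge (hys.trans hsz)
  exact hzx.symm.trans hzy

end MultilinearPageRank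

theorem mlpr_unique_minimal_sum_solution_general
    (n m : ℕ) (hm : 2 ≤ m)
    (R : Matrix (Fin n) ((Fin m → Fin n)) ℝ)
    (hR : ∀ i j, 0 ≤ R i j)
    (hRcol : ∀ j, ∑ i, R i j = 1)
    (v : Fin n → ℝ) (hv : ∀ i, 0 ≤ v i) (hv1 : ∑ i, v i = 1)
    (α : ℝ) (hα0 : 0 < α) (hα1 : α < 1)
    (s : ℝ) (hs0 : 0 < s) (hgs : α * s ^ m - s + (1 - α) = 0)
    (hsmin : ∀ z : ℝ, 0 < z → α * z ^ m - z + (1 - α) = 0 → s ≤ z) :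
    ∃! x : Fin n → ℝ, (∀ i, 0 ≤ x i) ∧ (∑ i, x i = s) ∧
      (∀ i, x i = α * (∑ j, R i j * ∏ p, x (j p)) + (1 - α) * v i) := by
  have hm0 : m ≠ 0 := by omega
  obtain ⟨x, hx0, hxs, hx⟩ :=
    exists_isFixedPt_mlprMap_sum_le hR hRcol hv hv1 hα0.le hα1.le hs0.le hgs
  have hsx := le_sum_of_mlprMap_le hRcol hv1 hm0 hα1 hsmin hx0 hx.le
  refine ⟨x, ⟨hx0, le_antisymm hxs hsx, fun i => (congrFun hx i).symm⟩, ?_⟩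
  rintro y ⟨hy0, hys, hy⟩
  exact eq_of_isFixedPt_mlprMap hR hRcol hv1 hm0 hα0.le hα1 hsmin hy0 hx0
    (funext fun i => (hy i).symm) hx hys.le hxs

/-- Let `s` be the smallest positive root of `g`. Then the multilinear
PageRank equation has exactly one nonnegative solution with entry sum `s`: such a
solution exists, and any two nonnegative solutions with entry sum `s` coincide. -/
theorem mlpr_unique_minimal_sum_solution
    (n m : ℕ) (hn : 1 ≤ n) (hm : 2 ≤ m)
    (R : Matrix (Fin n) ((Fin m → Fin n)) ℝ)
    (hR : ∀ i j, 0 ≤ R i j)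
    (hRcol : ∀ j, ∑ i, R i j = 1)
    (v : Fin n → ℝ) (hv : ∀ i, 0 ≤ v i) (hv1 : ∑ i, v i = 1)
    (α : ℝ) (hα0 : 0 < α) (hα1 : α < 1)
    (s : ℝ) (hs0 : 0 < s) (hgs : α * s ^ m - s + (1 - α) = 0)
    (hsmin : ∀ z : ℝ, 0 < z → α * z ^ m - z + (1 - α) = 0 → s ≤ z) :
    ∃! x : Fin n → ℝ, (∀ i, 0 ≤ x i) ∧ (∑ i, x i = s) ∧
      (∀ i, x i = α * (∑ j, R i j * ∏ p, x (j p)) + (1 - α) * v i) :=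
  mlpr_unique_minimal_sum_solution_general n m hm R hR hRcol v hv hv1 α hα0 hα1 s hs0 hgs hsmin
end

section
/- Let α ∈ (0, 1/m) and let x ∈ ℝ^n be a stochastic solution of x = αR x^{⊗m} + (1−α)v (x ≥ 0 entrywise, Σ_i x_i = 1). Then the matrix αP_x − I is invertible, where I is the n×n identity matrix. -/
/-!
The Jacobian `P_x` is entrywise nonnegative and, because every column of `R` and the vector `x`
both sum to one, each of its columns sums to `m`. Hence every column of `α P_x` sums to
`α m < 1`, so `α P_x - I` is strictly diagonally dominant by columns and therefore invertible.
-/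

open Finset

variable {ι κ : Type*} [Fintype ι] [DecidableEq ι] [Fintype κ] [DecidableEq κ]

/-- The Jacobian of `x ↦ R x^{⊗κ}`, where the tensor power is indexed by the positions `κ`. -/
def tensorPowerJacobian (R : Matrix ι (κ → ι) ℝ) (x : ι → ℝ) : Matrix ι ι ℝ :=
  fun i j => ∑ p : κ, ∑ t : κ → ι, if t p = j then R i t * ∏ q ∈ univ.erase p, x (t q) else 0

theorem sum_ite_prod_erase_eq_one {x : ι → ℝ} (hx1 : ∑ i, x i = 1) (p : κ) (j : ι) :
    ∑ t : κ → ι, (if t p = j then ∏ q ∈ univ.erase p, x (t q) else 0) = 1 := by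
  -- Put the indicator of `j` in slot `p` and `x` elsewhere, then expand the product of sums.
  let f : κ → ι → ℝ := fun q k => if q = p then (if k = j then 1 else 0) else x k
  have h_term (t : κ → ι) :
      (if t p = j then ∏ q ∈ univ.erase p, x (t q) else 0) = ∏ q, f q (t q) := by
    rw [← mul_prod_erase univ _ (mem_univ p),
      prod_congr rfl fun q hq => if_neg (ne_of_mem_erase hq)]
    by_cases h : t p = j <;> simp [f, h]
  have h_factor (q : κ) : ∑ k, f q k = 1 := by
    by_cases h : q = p <;> simp [f, h, hx1]
  simp only [h_term, ← Fintype.prod_sum, h_factor, prod_const_one]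

theorem tensorPowerJacobian_nonneg {R : Matrix ι (κ → ι) ℝ} (hR : ∀ i t, 0 ≤ R i t)
    {x : ι → ℝ} (hx : ∀ i, 0 ≤ x i) (i j : ι) : 0 ≤ tensorPowerJacobian R x i j :=
  sum_nonneg fun _ _ => sum_nonneg fun t _ => by
    split_ifs
    · exact mul_nonneg (hR i t) (prod_nonneg fun q _ => hx (t q))
    · exact le_rfl

theorem sum_tensorPowerJacobian_col {R : Matrix ι (κ → ι) ℝ} (hRcol : ∀ t, ∑ i, R i t = 1)
    {x : ι → ℝ} (hx1 : ∑ i, x i = 1) (j : ι) :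
    ∑ i, tensorPowerJacobian R x i j = Fintype.card κ := by
  have h_sum_R (p : κ) (t : κ → ι) :
      (∑ i, if t p = j then R i t * ∏ q ∈ univ.erase p, x (t q) else 0) =
        if t p = j then ∏ q ∈ univ.erase p, x (t q) else 0 := by
    split_ifs <;> simp [← sum_mul, hRcol]
  calc ∑ i, tensorPowerJacobian R x i j
      = ∑ p : κ, ∑ t : κ → ι, ∑ i,
          if t p = j then R i t * ∏ q ∈ univ.erase p, x (t q) else 0 := by
        unfold tensorPowerJacobian
        rw [sum_comm]
        exact sum_congr rfl fun _ _ => sum_comm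
    _ = Fintype.card κ := by
        simp only [h_sum_R, sum_ite_prod_erase_eq_one hx1, sum_const, card_univ, nsmul_eq_mul,
          mul_one]

theorem Matrix.isUnit_sub_one_of_nonneg_of_sum_col_lt_one {A : Matrix ι ι ℝ}
    (hA : ∀ i j, 0 ≤ A i j) (hcol : ∀ j, ∑ i, A i j < 1) : IsUnit (A - 1) := by
  refine (Matrix.isUnit_iff_isUnit_det _).mpr (isUnit_iff_ne_zero.mpr ?_)
  refine det_ne_zero_of_sum_col_lt_diag fun k => ?_
  have h_off : ∀ i ∈ univ.erase k, ‖(A - 1) i k‖ = A i k := fun i hi => by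
    rw [Matrix.sub_apply, Matrix.one_apply_ne (ne_of_mem_erase hi), sub_zero,
      Real.norm_of_nonneg (hA i k)]
  have h_diag : ‖(A - 1) k k‖ = 1 - A k k := by
    have : A k k < 1 := (single_le_sum (fun i _ => hA i k) (mem_univ k)).trans_lt (hcol k)
    rw [Matrix.sub_apply, Matrix.one_apply_eq, Real.norm_of_nonpos (by linarith), neg_sub]
  rw [sum_congr rfl h_off, h_diag]
  linarith [add_sum_erase univ (fun i => A i k) (mem_univ k), hcol k]

theorem mlpr_jacobian_invertible_general
    (n m : ℕ)
    (R : Matrix (Fin n) ((Fin m → Fin n)) ℝ)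
    (hR : ∀ i j, 0 ≤ R i j)
    (hRcol : ∀ j, ∑ i, R i j = 1)
    (α : ℝ) (hα0 : 0 < α) (hαm : α < 1 / (m : ℝ))
    (x : Fin n → ℝ) (hx : ∀ i, 0 ≤ x i) (hx1 : ∑ i, x i = 1)
    (P : Matrix (Fin n) (Fin n) ℝ)
    (hP : ∀ i j, P i j =
      ∑ p : Fin m, ∑ t : Fin m → Fin n,
        if t p = j then R i t * ∏ q ∈ Finset.univ.erase p, x (t q) else 0) :
    IsUnit (α • P - 1) := by
  have hP_eq : P = tensorPowerJacobian R x := Matrix.ext hP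
  have hαm' : α * m < 1 := by
    rcases (Nat.cast_nonneg m : (0 : ℝ) ≤ m).eq_or_lt with h | h
    · simp [← h]
    · rwa [lt_div_iff₀ h] at hαm
  subst hP_eq
  refine Matrix.isUnit_sub_one_of_nonneg_of_sum_col_lt_one
    (fun i j => mul_nonneg hα0.le (tensorPowerJacobian_nonneg hR hx i j)) fun j => ?_
  simpa only [Matrix.smul_apply, smul_eq_mul, ← mul_sum, sum_tensorPowerJacobian_col hRcol hx1,
    Fintype.card_fin] using hαm'

/-- If `α ∈ (0, 1/m)` and `x` is a stochastic solution of the multilinear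
PageRank equation, then `α P_x - I` is invertible. -/
theorem mlpr_jacobian_invertible
    (n m : ℕ) (hn : 1 ≤ n) (hm : 2 ≤ m)
    (R : Matrix (Fin n) ((Fin m → Fin n)) ℝ)
    (hR : ∀ i j, 0 ≤ R i j)
    (hRcol : ∀ j, ∑ i, R i j = 1)
    (v : Fin n → ℝ) (hv : ∀ i, 0 ≤ v i) (hv1 : ∑ i, v i = 1)
    (α : ℝ) (hα0 : 0 < α) (hαm : α < 1 / (m : ℝ))
    (x : Fin n → ℝ) (hx : ∀ i, 0 ≤ x i) (hx1 : ∑ i, x i = 1)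
    (hsol : ∀ i, x i = α * (∑ j, R i j * ∏ p, x (j p)) + (1 - α) * v i)
    (P : Matrix (Fin n) (Fin n) ℝ)
    (hP : ∀ i j, P i j =
      ∑ p : Fin m, ∑ t : Fin m → Fin n,
        if t p = j then R i t * ∏ q ∈ Finset.univ.erase p, x (t q) else 0) :
    IsUnit (α • P - 1) :=
  mlpr_jacobian_invertible_general n m R hR hRcol α hα0 hαm x hx hx1 P hP
end

section
/- Let α = 1/m and let x ∈ ℝ^n be a strictly positive stochastic solution of x = αR x^{⊗m} + (1−α)v (x_i > 0 for all i, Σ_i x_i = 1). Then the linear map w ↦ ((1/m)P_x − I)w is a bijection from Δ_0 = {w ∈ ℝ^n : Σ_i w_i = 0} onto Δ_0; in particular, if Σ_i w_i = 0 and ((1/m)P_x − I)w = 0, then w = 0. -/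
open Finset Matrix

/-!
Since `x` is a positive probability vector and the columns of `R` are stochastic, `M = (1/m) P_x`
is column stochastic, so `M - 1` maps into `Δ₀` and it suffices to rule out nonzero fixed points
of `M` in `Δ₀`. For a fixed point `w`, `|w| ≤ M |w|` entrywise with equal total sums, so
`M |w| = |w|`, which forces `M i j = 0` whenever `w i` and `w j` have strictly opposite signs.
But any two columns `a, b` of `P_x` share a nonzero row: put `a` and `b` in two of the `m ≥ 2`
slots of a tuple `t`; some `R i t` is positive, and then `P_x i a, P_x i b > 0`.
Taking `a` with `w a > 0` and `b` with `w b < 0`, the row `i` admits no sign for `w i`.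
-/

section ColStochastic

variable {ι : Type*} [Fintype ι] [DecidableEq ι] {M : Matrix ι ι ℝ} {w : ι → ℝ}

theorem mulVec_abs_eq_abs_of_mulVec_eq_self (hM : M ∈ colStochastic ℝ ι) (hw : M *ᵥ w = w) :
    M *ᵥ |w| = |w| := by
  have hle : ∀ i ∈ univ, |w i| ≤ (M *ᵥ |w|) i := fun i _ =>
    calc |w i| = |∑ j, M i j * w j| := by rw [← congrFun hw i]; rfl
      _ ≤ ∑ j, |M i j * w j| := abs_sum_le_sum_abs _ _
      _ = (M *ᵥ |w|) i := by
        simp [mulVec, dotProduct, abs_mul, abs_of_nonneg (nonneg_of_mem_colStochastic hM)]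
  have hsum : ∑ i, |w i| = ∑ i, (M *ᵥ |w|) i := (sum_mulVec_of_mem_colStochastic hM).symm
  funext i
  exact ((sum_eq_sum_iff_of_le hle).1 hsum i (mem_univ i)).symm

theorem apply_eq_zero_of_mulVec_eq_self (hM : M ∈ colStochastic ℝ ι) (hw : M *ᵥ w = w)
    {i j : ι} (hi : w i ≤ 0) (hj : 0 < w j) : M i j = 0 := by
  have hfix : M *ᵥ (|w| + w) = |w| + w := by
    rw [mulVec_add, mulVec_abs_eq_abs_of_mulVec_eq_self hM hw, hw]
  have hrow : ∑ k, M i k * (|w k| + w k) = 0 := by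
    have := congrFun hfix i
    simp only [mulVec, dotProduct, Pi.add_apply, Pi.abs_apply] at this
    rw [this, abs_of_nonpos hi, neg_add_cancel]
  have hterm := (sum_eq_zero_iff_of_nonneg fun k _ =>
    mul_nonneg (nonneg_of_mem_colStochastic hM) (by linarith [neg_abs_le (w k)])).1
    hrow j (mem_univ j)
  exact (mul_eq_zero.1 hterm).resolve_right (by rw [abs_of_pos hj]; positivity)

theorem eq_zero_of_mulVec_eq_self_of_sum_eq_zero (hM : M ∈ colStochastic ℝ ι)
    (hoverlap : ∀ a b, ∃ i, M i a ≠ 0 ∧ M i b ≠ 0) (hw : M *ᵥ w = w)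
    (hw0 : ∑ i, w i = 0) : w = 0 := by
  by_contra hne
  obtain ⟨j, hj⟩ := Function.ne_iff.1 hne
  obtain ⟨a, -, ha⟩ := exists_pos_of_sum_zero_of_exists_nonzero w hw0 ⟨j, mem_univ j, hj⟩
  obtain ⟨b, -, hb⟩ := exists_pos_of_sum_zero_of_exists_nonzero (-w)
    (by simp [sum_neg_distrib, hw0]) ⟨j, mem_univ j, by simpa using hj⟩
  obtain ⟨i, hia, hib⟩ := hoverlap a b
  rcases le_or_gt (w i) 0 with hi | hi
  · exact hia (apply_eq_zero_of_mulVec_eq_self hM hw hi ha)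
  · exact hib (apply_eq_zero_of_mulVec_eq_self hM (by rw [mulVec_neg, hw])
      (by simpa using hi.le) hb)

theorem bijOn_sub_one_mulVec_of_overlap (hM : M ∈ colStochastic ℝ ι)
    (hoverlap : ∀ a b, ∃ i, M i a ≠ 0 ∧ M i b ≠ 0) :
    Set.BijOn (fun w => (M - 1) *ᵥ w) {w | ∑ i, w i = 0} {w | ∑ i, w i = 0} := by
  let Δ₀ : Submodule ℝ (ι → ℝ) := LinearMap.ker (∑ i, LinearMap.proj i)
  have hΔ₀ : (Δ₀ : Set (ι → ℝ)) = {w | ∑ i, w i = 0} := by ext w; simp [Δ₀]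
  have hmaps : ∀ w ∈ Δ₀, (M - 1).mulVecLin w ∈ Δ₀ := fun w _ => by
    simp [Δ₀, sum_sub_distrib, sum_mulVec_of_mem_colStochastic hM]
  have hinj : Set.InjOn (M - 1).mulVecLin Δ₀ := by
    intro u hu u' hu' huu'
    have hfix : (M - 1) *ᵥ (u - u') = 0 := by rw [mulVec_sub]; exact sub_eq_zero.2 huu'
    rw [sub_mulVec, one_mulVec, sub_eq_zero] at hfix
    exact sub_eq_zero.1 (eq_zero_of_mulVec_eq_self_of_sum_eq_zero hM hoverlap hfix
      (by simpa [Δ₀, sum_sub_distrib] using sub_mem hu hu'))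
  rw [← hΔ₀]
  exact ⟨hmaps, hinj, (LinearMap.injOn_iff_surjOn hmaps).1 hinj⟩

end ColStochastic

section TensorJacobian

variable {ι κ : Type*} [Fintype ι] [DecidableEq ι] [Fintype κ] [DecidableEq κ]
  {R : Matrix ι (κ → ι) ℝ} {x : ι → ℝ}

/-- `P_x`, with `m`-tuples encoded as functions `κ → ι`. -/
def tensorJacobian (R : Matrix ι (κ → ι) ℝ) (x : ι → ℝ) : Matrix ι ι ℝ :=
  Matrix.of fun i j => ∑ p, ∑ t : κ → ι,
    if t p = j then R i t * ∏ q ∈ univ.erase p, x (t q) else 0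

theorem sum_ite_prod_erase (x : ι → ℝ) (p : κ) (j : ι) :
    ∑ t : κ → ι, (if t p = j then ∏ q ∈ univ.erase p, x (t q) else 0) =
      (∑ i, x i) ^ (Fintype.card κ - 1) := by
  let g : κ → ι → ℝ := fun q k => if q = p then (if k = j then 1 else 0) else x k
  have hg : ∀ t : κ → ι,
      (if t p = j then ∏ q ∈ univ.erase p, x (t q) else 0) = ∏ q, g q (t q) := by
    intro t
    rw [← mul_prod_erase univ _ (mem_univ p),
      prod_congr rfl fun q hq => if_neg (ne_of_mem_erase hq)]
    simp [g]
  rw [sum_congr rfl fun t _ => hg t, ← Fintype.prod_sum, ← mul_prod_erase univ _ (mem_univ p),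
    prod_congr rfl fun q hq => sum_congr rfl fun k _ => if_neg (ne_of_mem_erase hq)]
  simp [g, card_erase_of_mem]

theorem tensorJacobian_nonneg (hR : ∀ i t, 0 ≤ R i t) (hx : ∀ i, 0 ≤ x i) (i j : ι) :
    0 ≤ tensorJacobian R x i j :=
  sum_nonneg fun _ _ => sum_nonneg fun t _ =>
    ite_nonneg (mul_nonneg (hR _ t) (prod_nonneg fun _ _ => hx _)) le_rfl

theorem sum_tensorJacobian_col (hRcol : ∀ t, ∑ i, R i t = 1) (hx1 : ∑ i, x i = 1) (j : ι) :
    ∑ i, tensorJacobian R x i j = Fintype.card κ := by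
  calc ∑ i, tensorJacobian R x i j
      = ∑ p : κ, ∑ t : κ → ι, ∑ i,
          if t p = j then R i t * ∏ q ∈ univ.erase p, x (t q) else 0 := by
        simp only [tensorJacobian, of_apply]
        rw [sum_comm]
        exact sum_congr rfl fun p _ => sum_comm
    _ = ∑ p : κ, ∑ t : κ → ι, if t p = j then ∏ q ∈ univ.erase p, x (t q) else 0 := by
        refine sum_congr rfl fun p _ => sum_congr rfl fun t _ => ?_
        split_ifs
        · rw [← sum_mul, hRcol, one_mul]
        · exact sum_const_zero
    _ = Fintype.card κ := by simp [sum_ite_prod_erase, hx1]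

theorem tensorJacobian_pos (hR : ∀ i t, 0 ≤ R i t) (hx : ∀ i, 0 < x i) {i j : ι} {p : κ}
    {t : κ → ι} (ht : t p = j) (hRt : 0 < R i t) : 0 < tensorJacobian R x i j := by
  have hterm : ∀ p' t',
      0 ≤ if t' p' = j then R i t' * ∏ q ∈ univ.erase p', x (t' q) else 0 :=
    fun _ t' => ite_nonneg (mul_nonneg (hR i t') (prod_nonneg fun _ _ => (hx _).le)) le_rfl
  calc 0 < R i t * ∏ q ∈ univ.erase p, x (t q) := mul_pos hRt (prod_pos fun _ _ => hx _)
    _ = if t p = j then R i t * ∏ q ∈ univ.erase p, x (t q) else 0 := (if_pos ht).symm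
    _ ≤ ∑ t', if t' p = j then R i t' * ∏ q ∈ univ.erase p, x (t' q) else 0 :=
        single_le_sum (fun t' _ => hterm p t') (mem_univ t)
    _ ≤ tensorJacobian R x i j := by
        simp only [tensorJacobian, of_apply]
        exact single_le_sum (fun p' _ => sum_nonneg fun t' _ => hterm p' t') (mem_univ p)

theorem inv_card_smul_tensorJacobian_mem_colStochastic [Nonempty κ] (hR : ∀ i t, 0 ≤ R i t)
    (hRcol : ∀ t, ∑ i, R i t = 1) (hx : ∀ i, 0 ≤ x i) (hx1 : ∑ i, x i = 1) :
    (Fintype.card κ : ℝ)⁻¹ • tensorJacobian R x ∈ colStochastic ℝ ι := by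
  refine mem_colStochastic_iff_sum.2 ⟨fun i j => ?_, fun j => ?_⟩
  · exact mul_nonneg (by positivity) (tensorJacobian_nonneg hR hx i j)
  · simp [← mul_sum, sum_tensorJacobian_col hRcol hx1]

theorem tensorJacobian_columns_overlap [Nontrivial κ] (hR : ∀ i t, 0 ≤ R i t)
    (hRcol : ∀ t, ∑ i, R i t = 1) (hx : ∀ i, 0 < x i) (a b : ι) :
    ∃ i, 0 < tensorJacobian R x i a ∧ 0 < tensorJacobian R x i b := by
  obtain ⟨p, p', hpp'⟩ := exists_pair_ne κ
  let t : κ → ι := Function.update (fun _ => a) p' b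
  obtain ⟨i, -, hi⟩ := exists_ne_zero_of_sum_ne_zero (s := univ) (f := fun i => R i t)
    (by rw [hRcol]; exact one_ne_zero)
  have hRt : 0 < R i t := (hR i t).lt_of_ne' hi
  exact ⟨i, tensorJacobian_pos hR hx (p := p) (Function.update_of_ne hpp' _ _) hRt,
    tensorJacobian_pos hR hx (p := p') (Function.update_self _ _ _) hRt⟩

end TensorJacobian

theorem mlpr_jacobian_bijective_on_delta0_general
    (n m : ℕ) (hm : 2 ≤ m)
    (R : Matrix (Fin n) ((Fin m → Fin n)) ℝ)
    (hR : ∀ i j, 0 ≤ R i j)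
    (hRcol : ∀ j, ∑ i, R i j = 1)
    (x : Fin n → ℝ) (hx : ∀ i, 0 < x i) (hx1 : ∑ i, x i = 1)
    (P : Matrix (Fin n) (Fin n) ℝ)
    (hP : ∀ i j, P i j =
      ∑ p : Fin m, ∑ t : Fin m → Fin n,
        if t p = j then R i t * ∏ q ∈ Finset.univ.erase p, x (t q) else 0) :
    Set.BijOn (fun w => Matrix.mulVec ((1 / (m : ℝ)) • P - 1) w)
      {w : Fin n → ℝ | ∑ i, w i = 0} {w : Fin n → ℝ | ∑ i, w i = 0} ∧
    (∀ w : Fin n → ℝ, ∑ i, w i = 0 →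
      Matrix.mulVec ((1 / (m : ℝ)) • P - 1) w = 0 → w = 0) := by
  have : Nontrivial (Fin m) := Fin.nontrivial_iff_two_le.2 hm
  obtain rfl : P = tensorJacobian R x := Matrix.ext hP
  have hM : (1 / (m : ℝ)) • tensorJacobian R x ∈ colStochastic ℝ (Fin n) := by
    simpa using inv_card_smul_tensorJacobian_mem_colStochastic hR hRcol (fun i => (hx i).le) hx1
  have hoverlap : ∀ a b, ∃ i, ((1 / (m : ℝ)) • tensorJacobian R x) i a ≠ 0 ∧
      ((1 / (m : ℝ)) • tensorJacobian R x) i b ≠ 0 := fun a b => by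
    obtain ⟨i, hia, hib⟩ := tensorJacobian_columns_overlap hR hRcol hx a b
    exact ⟨i, by simp [hia.ne', hib.ne']; omega⟩
  have hbij := bijOn_sub_one_mulVec_of_overlap hM hoverlap
  exact ⟨hbij, fun w hw0 hw => hbij.injOn hw0 (by simp) (by simpa using hw)⟩

/-- If `α = 1/m` and `x` is a strictly positive stochastic solution of the
multilinear PageRank equation, then `w ↦ ((1/m)P_x - I)w` is a bijection from the
hyperplane `Δ₀ = {w : ∑ᵢ wᵢ = 0}` onto itself; in particular its kernel intersected with
`Δ₀` is trivial. -/
theorem mlpr_jacobian_bijective_on_delta0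
    (n m : ℕ) (hn : 1 ≤ n) (hm : 2 ≤ m)
    (R : Matrix (Fin n) ((Fin m → Fin n)) ℝ)
    (hR : ∀ i j, 0 ≤ R i j)
    (hRcol : ∀ j, ∑ i, R i j = 1)
    (v : Fin n → ℝ) (hv : ∀ i, 0 ≤ v i) (hv1 : ∑ i, v i = 1)
    (x : Fin n → ℝ) (hx : ∀ i, 0 < x i) (hx1 : ∑ i, x i = 1)
    (hsol : ∀ i, x i = (1 / (m : ℝ)) * (∑ j, R i j * ∏ p, x (j p))
      + (1 - 1 / (m : ℝ)) * v i)
    (P : Matrix (Fin n) (Fin n) ℝ)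
    (hP : ∀ i j, P i j =
      ∑ p : Fin m, ∑ t : Fin m → Fin n,
        if t p = j then R i t * ∏ q ∈ Finset.univ.erase p, x (t q) else 0) :
    Set.BijOn (fun w => Matrix.mulVec ((1 / (m : ℝ)) • P - 1) w)
      {w : Fin n → ℝ | ∑ i, w i = 0} {w : Fin n → ℝ | ∑ i, w i = 0} ∧
    (∀ w : Fin n → ℝ, ∑ i, w i = 0 →
      Matrix.mulVec ((1 / (m : ℝ)) • P - 1) w = 0 → w = 0) :=
  mlpr_jacobian_bijective_on_delta0_general n m hm R hR hRcol x hx hx1 P hP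
end
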